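/- arXiv:2410.01048 — 2 statements merged into one kernel-verified Lean document; each statement's English description precedes it below -/
import Mathlib

section
/- The greedy algorithm for maximizing a monotone submodular coverage function subject to a partition matroid constraint achieves at least half the optimum: if there exists an independent set of the partition matroid covering OPT elements, then the greedy solution (repeatedly adding the set covering the most new elements while maintaining independence) covers at least OPT/2 elements. -/
open Finset

/-- If `#s ≤ #t` and each value of `f` on `s` is below each value of `c` on `t`,
then the sum of `f` over `s` is at most the sum of `c` over `t`. -/
private lemma sum_le_sum_of_card_le_aux {α β : Type*} (s : Finset α) (t : Finset β)
    (f : α → ℕ) (c : β → ℕ) (h : s.card ≤ t.card)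
    (hfc : ∀ x ∈ s, ∀ j ∈ t, f x ≤ c j) :
    ∑ x ∈ s, f x ≤ ∑ j ∈ t, c j := by
  rcases s.eq_empty_or_nonempty with rfl | hs
  · simp
  have ht : t.Nonempty := card_pos.mp (lt_of_lt_of_le (card_pos.mpr hs) h)
  obtain ⟨j0, hj0, hmin⟩ := t.exists_min_image c ht
  calc ∑ x ∈ s, f x ≤ ∑ _x ∈ s, c j0 := sum_le_sum fun x hx => hfc x hx j0 hj0
    _ = s.card * c j0 := by rw [sum_const, smul_eq_mul]
    _ ≤ t.card * c j0 := Nat.mul_le_mul_right _ h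
    _ = ∑ _j ∈ t, c j0 := by rw [sum_const, smul_eq_mul]
    _ ≤ ∑ j ∈ t, c j := sum_le_sum fun j hj => hmin j hj

/-- The greedy algorithm for maximizing coverage subject to a partition matroid
constraint achieves at least half the optimum: the ground set `ι` consists of sets
`Sets i ⊆ U`, partitioned into classes by `part` with capacity `B` per class
(`Indep`); the greedy solution is the sequence `g 0, ..., g (m-1)` where each prefix
is independent, each step adds an element maximizing the increase in coverage among
those keeping independence, and at termination no addition increases coverage. If
some independent set covers at least `OPT` elements, greedy covers at least `OPT/2`. -/
theorem greedy_partition_matroid_coverage {U ι A : Type*}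
    [DecidableEq U] [DecidableEq ι] [DecidableEq A]
    (Sets : ι → Finset U) (part : ι → A) (B : ℕ)
    (Indep : Finset ι → Prop)
    (hIndep : ∀ I, Indep I ↔ ∀ a, (I.filter (fun i => part i = a)).card ≤ B)
    (cov : Finset ι → ℕ)
    (hcov : ∀ I, cov I = (I.biUnion Sets).card)
    (g : ℕ → ι) (m : ℕ)
    (hpref : ∀ j < m, Indep ((Finset.range (j + 1)).image g))
    (hgreedy : ∀ j < m, ∀ x : ι, Indep (insert x ((Finset.range j).image g)) →
      cov (insert x ((Finset.range j).image g)) ≤ cov ((Finset.range (j + 1)).image g))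
    (hstop : ∀ x : ι, Indep (insert x ((Finset.range m).image g)) →
      cov (insert x ((Finset.range m).image g)) ≤ cov ((Finset.range m).image g))
    (OPT : ℕ) (hOPT : ∃ J, Indep J ∧ OPT ≤ cov J) :
    OPT ≤ 2 * cov ((Finset.range m).image g) := by
  classical
  obtain ⟨J, hJ, hOPTJ⟩ := hOPT
  set G : Finset ι := (Finset.range m).image g with hGdef
  -- all prefixes are independent
  have hprefix : ∀ k ≤ m, Indep ((Finset.range k).image g) := by
    intro k hk
    cases k with
    | zero => rw [hIndep]; intro a; simp
    | succ j => exact hpref j hk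
  have hIndepG : Indep G := hprefix m le_rfl
  -- marginal coverage formula
  have hmarg : ∀ (I : Finset ι) (x : ι),
      cov (insert x I) = cov I + (Sets x \ I.biUnion Sets).card := by
    intro I x
    rw [hcov, hcov, Finset.biUnion_insert, ← Finset.card_sdiff_add_card, add_comm]
  -- coverage is monotone
  have hcovmono : ∀ I I' : Finset ι, I ⊆ I' → cov I ≤ cov I' := by
    intro I I' hsub
    rw [hcov, hcov]
    exact Finset.card_le_card (Finset.biUnion_subset_biUnion_of_subset_left _ hsub)
  set X : Finset U := G.biUnion Sets with hXdef
  set marg : ι → ℕ := fun x => (Sets x \ X).card with hmargdef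
  -- step 1:  OPT ≤ cov G + ∑ marg over J
  have step1 : OPT ≤ cov G + ∑ x ∈ J, marg x := by
    have h1 : (J.biUnion Sets).card ≤ X.card + ((J.biUnion Sets) \ X).card := by
      have := Finset.card_le_card_sdiff_add_card (s := J.biUnion Sets) (t := X)
      omega
    have h2 : (J.biUnion Sets) \ X ⊆ J.biUnion (fun x => Sets x \ X) := by
      intro u hu
      simp only [Finset.mem_sdiff, Finset.mem_biUnion] at hu ⊢
      obtain ⟨⟨x, hx, hux⟩, hnX⟩ := hu
      exact ⟨x, hx, hux, hnX⟩
    have h3 : ((J.biUnion Sets) \ X).card ≤ ∑ x ∈ J, marg x :=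
      le_trans (Finset.card_le_card h2) (Finset.card_biUnion_le)
    have h4 : OPT ≤ (J.biUnion Sets).card := by rw [← hcov]; exact hOPTJ
    have h5 : cov G = X.card := hcov G
    omega
  -- split J into insertable / not insertable
  set A1 : Finset ι := J.filter (fun x => Indep (insert x G)) with hA1def
  set A2 : Finset ι := J.filter (fun x => ¬ Indep (insert x G)) with hA2def
  have hsplit : ∑ x ∈ J, marg x = ∑ x ∈ A1, marg x + ∑ x ∈ A2, marg x :=
    (Finset.sum_filter_add_sum_filter_not _ _ _).symm
  -- insertable elements have zero marginal value
  have hA1zero : ∑ x ∈ A1, marg x = 0 := by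
    apply Finset.sum_eq_zero
    intro x hx
    obtain ⟨_, hind⟩ := Finset.mem_filter.mp hx
    have h1 := hstop x hind
    have h2 := hmarg G x
    have h3 : marg x = (Sets x \ G.biUnion Sets).card := rfl
    omega
  -- the gains of greedy steps
  set gain : ℕ → ℕ := fun j =>
      cov ((Finset.range (j + 1)).image g) - cov ((Finset.range j).image g) with hgaindef
  have hmonof : Monotone (fun j => cov ((Finset.range j).image g)) := by
    apply monotone_nat_of_le_succ
    intro j
    exact hcovmono _ _ (Finset.image_subset_image (by
      intro k hk; simp only [Finset.mem_range] at hk ⊢; omega))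
  have htele : ∑ j ∈ Finset.range m, gain j = cov G := by
    have := Finset.sum_range_tsub hmonof m
    rw [this]
    have h0 : cov ((Finset.range 0).image g) = 0 := by
      rw [hcov]; simp
    rw [h0, ← hGdef, Nat.sub_zero]
  -- "new" steps
  set N : Finset ℕ := (Finset.range m).filter (fun j => g j ∉ (Finset.range j).image g)
    with hNdef
  have hNsub : N ⊆ Finset.range m := Finset.filter_subset _ _
  have hNimg : N.image g = G := by
    apply Finset.Subset.antisymm
    · exact Finset.image_subset_image hNsub
    · intro v hv
      rw [hGdef, Finset.mem_image] at hv
      obtain ⟨i, hi, hgi⟩ := hv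
      rw [Finset.mem_range] at hi
      have hex : ∃ k, k < m ∧ g k = v := ⟨i, hi, hgi⟩
      classical
      let j := Nat.find hex
      obtain ⟨hjm, hgj⟩ := Nat.find_spec hex
      have hjN : j ∈ N := by
        rw [hNdef, Finset.mem_filter, Finset.mem_range]
        refine ⟨hjm, ?_⟩
        intro hmem
        rw [Finset.mem_image] at hmem
        obtain ⟨k, hk, hgk⟩ := hmem
        rw [Finset.mem_range] at hk
        have : k < m := lt_trans hk hjm
        exact Nat.find_min hex hk ⟨this, by rw [hgk, hgj]⟩
      rw [Finset.mem_image]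
      exact ⟨j, hjN, hgj⟩
  have hNinj : Set.InjOn g N := by
    intro j hj j' hj' he
    have hj1 := Finset.mem_coe.mp hj
    have hj'1 := Finset.mem_coe.mp hj'
    by_contra hne
    rcases lt_or_gt_of_ne hne with h | h
    · exact (Finset.mem_filter.mp hj'1).2 (Finset.mem_image.mpr ⟨j, Finset.mem_range.mpr h, he⟩)
    · exact (Finset.mem_filter.mp hj1).2 (Finset.mem_image.mpr ⟨j', Finset.mem_range.mpr h, he.symm⟩)
  -- fiber cardinalities of new steps equal those of G
  have hNfiber : ∀ a, (N.filter (fun j => part (g j) = a)).card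
      = (G.filter (fun v => part v = a)).card := by
    intro a
    have himg : (N.filter (fun j => part (g j) = a)).image g
        = (G.filter (fun v => part v = a)) := by
      rw [← hNimg, Finset.filter_image]
    rw [← himg]
    exact (Finset.card_image_of_injOn
      (hNinj.mono (by intro j hj; exact Finset.mem_filter.mp hj |>.1))).symm
  -- the key bound: marg x ≤ gain j for suitable steps
  have hcore : ∀ x ∈ A2, ∀ j ∈ N.filter (fun j => part (g j) = part x), marg x ≤ gain j := by
    intro x hx j hj
    rw [Finset.mem_filter] at hj
    obtain ⟨hjN, hpa⟩ := hj
    rw [hNdef, Finset.mem_filter, Finset.mem_range] at hjN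
    obtain ⟨hjm, hnew⟩ := hjN
    set Gj : Finset ι := (Finset.range j).image g with hGjdef
    -- G_{j+1} as insert
    have hGsucc : (Finset.range (j + 1)).image g = insert (g j) Gj := by
      rw [Finset.range_add_one, Finset.image_insert]
    -- independence of insert x Gj
    have hins : Indep (insert x Gj) := by
      rw [hIndep]
      intro a
      by_cases hax : a = part x
      · subst hax
        have h1 : (insert x Gj).filter (fun i => part i = part x)
            ⊆ insert x (Gj.filter (fun i => part i = part x)) := by
          intro y hy
          rw [Finset.mem_filter, Finset.mem_insert] at hy
          rcases hy.1 with rfl | hyG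
          · exact Finset.mem_insert_self _ _
          · exact Finset.mem_insert_of_mem (Finset.mem_filter.mpr ⟨hyG, hy.2⟩)
        have h2 : ((insert x Gj).filter (fun i => part i = part x)).card
            ≤ (Gj.filter (fun i => part i = part x)).card + 1 := by
          calc _ ≤ (insert x (Gj.filter (fun i => part i = part x))).card :=
                Finset.card_le_card h1
            _ ≤ _ := Finset.card_insert_le _ _
        -- count in G_{j+1}
        have h3 : ((Finset.range (j + 1)).image g).filter (fun i => part i = part x)
            = insert (g j) (Gj.filter (fun i => part i = part x)) := by
          rw [hGsucc, Finset.filter_insert, if_pos hpa]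
        have h4 : (Gj.filter (fun i => part i = part x)).card + 1 ≤ B := by
          have hIj1 := (hIndep _).mp (hprefix (j + 1) hjm)
          have := hIj1 (part x)
          rw [h3] at this
          have hgnotin : g j ∉ Gj.filter (fun i => part i = part x) :=
            fun hmem => hnew (Finset.mem_filter.mp hmem).1
          rw [Finset.card_insert_of_notMem hgnotin] at this
          exact this
        omega
      · have h1 : (insert x Gj).filter (fun i => part i = a)
            = Gj.filter (fun i => part i = a) := by
          rw [Finset.filter_insert, if_neg (fun h => hax h.symm)]
        rw [h1]
        exact (hIndep _).mp (hprefix j (le_of_lt hjm)) a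
    -- greedy inequality at step j
    have hgr : cov (insert x Gj) ≤ cov ((Finset.range (j + 1)).image g) :=
      hgreedy j hjm x hins
    have hm1 := hmarg Gj x
    -- marg x ≤ marginal w.r.t. Gj
    have hsubXU : Gj.biUnion Sets ⊆ X := by
      rw [hXdef, hGdef]
      apply Finset.biUnion_subset_biUnion_of_subset_left
      apply Finset.image_subset_image
      intro k hk; simp only [Finset.mem_range] at hk ⊢; omega
    have hm2 : marg x ≤ (Sets x \ Gj.biUnion Sets).card := by
      apply Finset.card_le_card
      exact Finset.sdiff_subset_sdiff (le_refl _) hsubXU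
    have hmono2 : cov Gj ≤ cov ((Finset.range (j + 1)).image g) :=
      hmonof (Nat.le_succ j)
    have hgeq : gain j = cov ((Finset.range (j + 1)).image g) - cov Gj := rfl
    omega
  -- cardinality bound per class
  have hcard : ∀ a ∈ A2.image part,
      (A2.filter (fun x => part x = a)).card
        ≤ (N.filter (fun j => part (g j) = a)).card := by
    intro a ha
    rw [Finset.mem_image] at ha
    obtain ⟨x, hxA2, hpx⟩ := ha
    have hxJ : x ∈ J := (Finset.mem_filter.mp hxA2).1
    have hxnind : ¬ Indep (insert x G) := (Finset.mem_filter.mp hxA2).2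
    have hxnG : x ∉ G := by
      intro hxG
      exact hxnind (by rwa [Finset.insert_eq_self.mpr hxG])
    -- class a is full in G
    have hfull : (G.filter (fun v => part v = a)).card = B := by
      rw [hIndep] at hxnind
      push_neg at hxnind
      obtain ⟨a', ha'⟩ := hxnind
      have hGle : ∀ b, (G.filter (fun v => part v = b)).card ≤ B := (hIndep G).mp hIndepG
      have hsub : (insert x G).filter (fun i => part i = a')
          ⊆ insert x (G.filter (fun i => part i = a')) := by
        intro y hy
        rw [Finset.mem_filter, Finset.mem_insert] at hy
        rcases hy.1 with rfl | hyG
        · exact Finset.mem_insert_self _ _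
        · exact Finset.mem_insert_of_mem (Finset.mem_filter.mpr ⟨hyG, hy.2⟩)
      have hle : ((insert x G).filter (fun i => part i = a')).card
          ≤ (G.filter (fun i => part i = a')).card + 1 :=
        le_trans (Finset.card_le_card hsub) (Finset.card_insert_le _ _)
      have ha'eq : a' = a := by
        by_contra hne
        have : (insert x G).filter (fun i => part i = a')
            = G.filter (fun i => part i = a') := by
          rw [Finset.filter_insert, if_neg]
          intro h; rw [hpx] at h; exact hne h.symm
        rw [this] at ha'
        exact absurd (hGle a') (not_le.mpr ha')
      subst ha'eq
      have := hGle a'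
      omega
    rw [hNfiber a, hfull]
    -- A2 fiber is a subset of J fiber
    calc (A2.filter (fun x => part x = a)).card
        ≤ (J.filter (fun x => part x = a)).card := by
          apply Finset.card_le_card
          intro y hy
          rw [Finset.mem_filter] at hy ⊢
          exact ⟨(Finset.mem_filter.mp hy.1).1, hy.2⟩
      _ ≤ B := (hIndep J).mp hJ a
  -- step 2: bound the A2 sum by cov G
  have step2 : ∑ x ∈ A2, marg x ≤ cov G := by
    have hfib : ∑ a ∈ A2.image part, ∑ x ∈ A2.filter (fun x => part x = a), marg x
        = ∑ x ∈ A2, marg x := by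
      apply Finset.sum_fiberwise_of_maps_to
      intro x hx
      exact Finset.mem_image_of_mem part hx
    rw [← hfib]
    calc ∑ a ∈ A2.image part, ∑ x ∈ A2.filter (fun x => part x = a), marg x
        ≤ ∑ a ∈ A2.image part, ∑ j ∈ N.filter (fun j => part (g j) = a), gain j := by
          apply Finset.sum_le_sum
          intro a ha
          apply sum_le_sum_of_card_le_aux _ _ _ _ (hcard a ha)
          intro x hx j hj
          have hxA2 : x ∈ A2 := (Finset.mem_filter.mp hx).1
          have hpxa : part x = a := (Finset.mem_filter.mp hx).2
          apply hcore x hxA2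
          rw [hpxa]
          exact hj
      _ = ∑ j ∈ N.filter (fun j => part (g j) ∈ A2.image part), gain j :=
          Finset.sum_fiberwise_eq_sum_filter N (A2.image part) (fun j => part (g j)) gain
      _ ≤ ∑ j ∈ Finset.range m, gain j := by
          apply Finset.sum_le_sum_of_subset
          exact le_trans (Finset.filter_subset _ _) hNsub
      _ = cov G := htele
  omega
end

section
/- Let G be a directed graph in which every vertex is at distance at most D* from the root r. Suppose there exist ρ pairwise vertex-disjoint trees T_1, ..., T_ρ in G, each rooted at some vertex q_i, of height at most D*, maximum out-degree at most ρ, and each containing exactly ρ terminals. Then G contains a subtree rooted at r, of height at most 2D*, maximum out-degree at most 2ρ, containing at least ρ^2 terminals. -/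
section MTCAux

open Classical

variable {V : Type*}

/-- Walks of length `n` from `a` to `b` along relation `EH`. -/
def mtcWk (EH : V → V → Prop) (a b : V) (n : ℕ) : Prop :=
  ∃ w : ℕ → V, w 0 = a ∧ w n = b ∧ ∀ k < n, EH (w k) (w (k + 1))

theorem mtcWk_zero {EH : V → V → Prop} {a b : V} (h : mtcWk EH a b 0) : a = b := by
  obtain ⟨w, h0, hn, -⟩ := h
  rw [← h0, ← hn]

theorem mtcWk_refl (EH : V → V → Prop) (a : V) : mtcWk EH a a 0 :=
  ⟨fun _ => a, rfl, rfl, fun k hk => absurd hk (Nat.not_lt_zero k)⟩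

theorem mtcWk_snoc {EH : V → V → Prop} {a b c : V} {n : ℕ}
    (h : mtcWk EH a b n) (e : EH b c) : mtcWk EH a c (n + 1) := by
  obtain ⟨w, h0, hn, he⟩ := h
  refine ⟨fun k => if k ≤ n then w k else c, by simp [h0], by simp, ?_⟩
  intro k hk
  by_cases h1 : k < n
  · simp only [if_pos (show k ≤ n by omega), if_pos (show k + 1 ≤ n by omega)]
    exact he k h1
  · have hk' : k = n := by omega
    subst hk'
    simp only [if_pos le_rfl, if_neg (show ¬ k + 1 ≤ k by omega)]
    rw [hn]
    exact e

theorem mtcWk_cons {EH : V → V → Prop} {a b c : V} {n : ℕ}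
    (e : EH a b) (h : mtcWk EH b c n) : mtcWk EH a c (n + 1) := by
  obtain ⟨w, h0, hn, he⟩ := h
  refine ⟨fun k => if k = 0 then a else w (k - 1), rfl, by simpa using hn, ?_⟩
  intro k hk
  match k with
  | 0 => simpa [h0] using e
  | k + 1 =>
    simpa using he k (by omega)

theorem mtcWk_penult {EH : V → V → Prop} {a c : V} {n : ℕ}
    (h : mtcWk EH a c (n + 1)) : ∃ b, mtcWk EH a b n ∧ EH b c := by
  obtain ⟨w, h0, hn, he⟩ := h
  exact ⟨w n, ⟨w, h0, rfl, fun k hk => he k (by omega)⟩, hn ▸ he n (by omega)⟩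

theorem mtcWk_trans {EH : V → V → Prop} {a b c : V} {n m : ℕ}
    (h1 : mtcWk EH a b n) (h2 : mtcWk EH b c m) : mtcWk EH a c (n + m) := by
  induction m generalizing c with
  | zero => exact (mtcWk_zero h2) ▸ h1
  | succ m ih =>
    obtain ⟨d, hd, he⟩ := mtcWk_penult h2
    exact mtcWk_snoc (ih hd) he

/-- BFS distance from `r` to `u` along `EH`. -/
noncomputable def mtcD (EH : V → V → Prop) (r u : V) : ℕ :=
  sInf {n | mtcWk EH r u n}

theorem mtcD_le {EH : V → V → Prop} {r u : V} {n : ℕ} (h : mtcWk EH r u n) :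
    mtcD EH r u ≤ n :=
  Nat.sInf_le (show n ∈ {m | mtcWk EH r u m} from h)

theorem mtcD_mem {EH : V → V → Prop} {r u : V} {n : ℕ} (h : mtcWk EH r u n) :
    mtcWk EH r u (mtcD EH r u) :=
  Nat.sInf_mem (⟨n, show n ∈ {m | mtcWk EH r u m} from h⟩ : {m | mtcWk EH r u m}.Nonempty)

/-- Parent function: a chosen predecessor one step closer to `r`. -/
noncomputable def mtcPar (EH : V → V → Prop) (r : V) (u : V) : V :=
  if h : ∃ v, EH v u ∧ mtcWk EH r v (mtcD EH r u - 1) then h.choose else r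

theorem mtcPar_spec {EH : V → V → Prop} {r u : V}
    (h : ∃ v, EH v u ∧ mtcWk EH r v (mtcD EH r u - 1)) :
    EH (mtcPar EH r u) u ∧ mtcWk EH r (mtcPar EH r u) (mtcD EH r u - 1) := by
  rw [mtcPar, dif_pos h]
  exact h.choose_spec

end MTCAux

/-- Let `G` (given by `E`) be a directed graph in which every vertex is reachable from
`r` within `Dstar` steps. If there are `ρ` pairwise vertex-disjoint trees, each of
height at most `Dstar`, maximum out-degree at most `ρ`, and containing exactly `ρ`
terminals, then `G` contains a tree rooted at `r` of height at most `2·Dstar`,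
maximum out-degree at most `2·ρ`, containing at least `ρ^2` terminals. -/
theorem many_trees_case {V : Type*} [DecidableEq V] (E : V → V → Prop)
    (r : V) (Dstar ρ : ℕ) (S : Finset V)
    (hreach : ∀ v : V, ∃ (p : ℕ → V) (L : ℕ), L ≤ Dstar ∧ p 0 = r ∧ p L = v ∧
      ∀ j < L, E (p j) (p (j + 1)))
    (Vt : Fin ρ → Finset V) (q : Fin ρ → V) (par : Fin ρ → V → V)
    (hdisj : ∀ i j, i ≠ j → Disjoint (Vt i) (Vt j))
    (hroot : ∀ i, q i ∈ Vt i)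
    (hpar : ∀ i, ∀ u ∈ Vt i, u ≠ q i → par i u ∈ Vt i ∧ E (par i u) u)
    (hheight : ∀ i, ∀ u ∈ Vt i, ∃ n ≤ Dstar, (par i)^[n] u = q i)
    (hdeg : ∀ i v, ((Vt i).filter (fun u => u ≠ q i ∧ par i u = v)).card ≤ ρ)
    (hterm : ∀ i, ((Vt i) ∩ S).card = ρ) :
    ∃ (T' : Finset V) (parent' : V → V), r ∈ T' ∧
      (∀ u ∈ T', u ≠ r → parent' u ∈ T' ∧ E (parent' u) u) ∧
      (∀ u ∈ T', ∃ n ≤ 2 * Dstar, parent'^[n] u = r) ∧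
      (∀ v, (T'.filter (fun u => u ≠ r ∧ parent' u = v)).card ≤ 2 * ρ) ∧
      ρ ^ 2 ≤ (T' ∩ S).card := by
  classical
  choose p L hL hp0 hpL hpE using fun i => hreach (q i)
  set EH : V → V → Prop := fun v u =>
    (∃ i, u ∈ Vt i ∧ u ≠ q i ∧ par i u = v) ∨
    (∃ i, (∃ k < L i, p i k = v) ∧
      u = p i (Nat.findGreatest (fun k => k < L i ∧ p i k = v) (L i) + 1)) with hEHdef
  set HV : Finset V := insert r ((Finset.univ.biUnion Vt) ∪
    Finset.univ.biUnion (fun i => (Finset.range (L i + 1)).image (p i))) with hHVdef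
  set T' : Finset V := HV.filter (fun u => ∃ n ≤ 2 * Dstar, mtcWk EH r u n) with hT'def
  -- EH edges are genuine edges of G
  have hEHE : ∀ v u, EH v u → E v u := by
    intro v u h
    simp only [hEHdef] at h
    rcases h with ⟨i, hu, hne, hp⟩ | ⟨i, ⟨k, hk, hpk⟩, hu⟩
    · exact hp ▸ (hpar i u hu hne).2
    · have hg := Nat.findGreatest_spec (P := fun k => k < L i ∧ p i k = v)
        (m := k) (le_of_lt hk) ⟨hk, hpk⟩
      subst hu
      have hE := hpE i _ hg.1
      rwa [hg.2] at hE
  -- targets of EH edges are in HV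
  have hEHmem : ∀ v u, EH v u → u ∈ HV := by
    intro v u h
    simp only [hEHdef] at h
    rcases h with ⟨i, hu, -, -⟩ | ⟨i, ⟨k, hk, hpk⟩, hu⟩
    · exact Finset.mem_insert_of_mem (Finset.mem_union_left _
        (Finset.mem_biUnion.2 ⟨i, Finset.mem_univ i, hu⟩))
    · have hg := Nat.findGreatest_spec (P := fun k => k < L i ∧ p i k = v)
        (m := k) (le_of_lt hk) ⟨hk, hpk⟩
      refine Finset.mem_insert_of_mem (Finset.mem_union_right _
        (Finset.mem_biUnion.2 ⟨i, Finset.mem_univ i, ?_⟩))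
      exact hu ▸ Finset.mem_image.2 ⟨_, Finset.mem_range.2 (Nat.succ_lt_succ hg.1), rfl⟩
  have hRmem : ∀ u n, mtcWk EH r u n → u ∈ HV := by
    intro u n h
    match n with
    | 0 =>
      rw [← mtcWk_zero h]
      exact Finset.mem_insert_self r _
    | n + 1 =>
      obtain ⟨v, -, he⟩ := mtcWk_penult h
      exact hEHmem v u he
  have hmemT' : ∀ u n, n ≤ 2 * Dstar → mtcWk EH r u n → u ∈ T' := by
    intro u n hn h
    exact Finset.mem_filter.2 ⟨hRmem u n h, n, hn, h⟩
  have hrT' : r ∈ T' := hmemT' r 0 (by omega) (mtcWk_refl EH r)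
  -- key parent facts
  have hparfact : ∀ u ∈ T', u ≠ r →
      EH (mtcPar EH r u) u ∧ mtcPar EH r u ∈ T' ∧
        mtcD EH r (mtcPar EH r u) < mtcD EH r u ∧ mtcD EH r u ≤ 2 * Dstar := by
    intro u hu hur
    obtain ⟨-, n, hn, hw⟩ := Finset.mem_filter.1 hu
    have hdle : mtcD EH r u ≤ n := mtcD_le hw
    have hdw : mtcWk EH r u (mtcD EH r u) := mtcD_mem hw
    have hd0 : mtcD EH r u ≠ 0 := by
      intro h0
      rw [h0] at hdw
      exact hur (mtcWk_zero hdw).symm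
    have hdw' : mtcWk EH r u ((mtcD EH r u - 1) + 1) := by
      have heq : mtcD EH r u - 1 + 1 = mtcD EH r u := by omega
      rwa [heq]
    obtain ⟨v, hv, he⟩ := mtcWk_penult hdw'
    have hex : ∃ v, EH v u ∧ mtcWk EH r v (mtcD EH r u - 1) := ⟨v, he, hv⟩
    have hs := mtcPar_spec hex
    have hdp : mtcD EH r (mtcPar EH r u) ≤ mtcD EH r u - 1 := mtcD_le hs.2
    exact ⟨hs.1, hmemT' _ _ (by omega) hs.2, by omega, by omega⟩
  -- iterating the parent reaches r
  have hiter : ∀ n, ∀ u ∈ T', mtcD EH r u ≤ n → ∃ m ≤ n, (mtcPar EH r)^[m] u = r := by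
    intro n
    induction n with
    | zero =>
      intro u hu hd
      obtain ⟨-, k, hk, hw⟩ := Finset.mem_filter.1 hu
      have hdw : mtcWk EH r u (mtcD EH r u) := mtcD_mem hw
      rw [Nat.le_zero.1 hd] at hdw
      exact ⟨0, le_rfl, (mtcWk_zero hdw).symm⟩
    | succ n ih =>
      intro u hu hd
      by_cases hur : u = r
      · exact ⟨0, by omega, hur⟩
      · obtain ⟨-, hpT, hdlt, -⟩ := hparfact u hu hur
        obtain ⟨m, hm, hit⟩ := ih (mtcPar EH r u) hpT (by omega)
        exact ⟨m + 1, by omega, by rw [Function.iterate_succ_apply]; exact hit⟩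
  -- degree bound
  have hdeg' : ∀ v, (T'.filter (fun u => u ≠ r ∧ mtcPar EH r u = v)).card ≤ 2 * ρ := by
    intro v
    set A : Finset V := if h : ∃ i, v ∈ Vt i then
        (Vt h.choose).filter (fun u => u ≠ q h.choose ∧ par h.choose u = v) else ∅ with hAdef
    set B : Finset V := Finset.univ.image
      (fun i : Fin ρ => p i (Nat.findGreatest (fun k => k < L i ∧ p i k = v) (L i) + 1))
      with hBdef
    have hsub : T'.filter (fun u => u ≠ r ∧ mtcPar EH r u = v) ⊆ A ∪ B := by
      intro u hu
      obtain ⟨huT, hur, hpv⟩ := Finset.mem_filter.1 hu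
      obtain ⟨he, -, -, -⟩ := hparfact u huT hur
      rw [hpv] at he
      simp only [hEHdef] at he
      rcases he with ⟨i, hui, hne, hpar'⟩ | ⟨i, -, hu'⟩
      · have hvi : v ∈ Vt i := hpar' ▸ (hpar i u hui hne).1
        have hex : ∃ i, v ∈ Vt i := ⟨i, hvi⟩
        have hieq : i = hex.choose := by
          by_contra hne'
          exact (Finset.disjoint_left.1 (hdisj i hex.choose hne') hvi) hex.choose_spec
        refine Finset.mem_union_left _ ?_
        rw [hAdef, dif_pos hex]
        exact Finset.mem_filter.2 ⟨hieq ▸ hui, by rw [← hieq]; exact hne,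
          by rw [← hieq]; exact hpar'⟩
      · refine Finset.mem_union_right _ ?_
        rw [hBdef]
        exact Finset.mem_image.2 ⟨i, Finset.mem_univ i, hu'.symm⟩
    have hAcard : A.card ≤ ρ := by
      rw [hAdef]
      split_ifs with h
      · exact hdeg _ v
      · simp
    have hBcard : B.card ≤ ρ := by
      rw [hBdef]
      exact (Finset.card_image_le).trans (by simp)
    calc (T'.filter (fun u => u ≠ r ∧ mtcPar EH r u = v)).card
        ≤ (A ∪ B).card := Finset.card_le_card hsub
      _ ≤ A.card + B.card := Finset.card_union_le A B
      _ ≤ 2 * ρ := by omega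
  -- walk from r to q i
  have hrq : ∀ i, ∃ n ≤ Dstar, mtcWk EH r (q i) n := by
    intro i
    have hA : ∀ m j, j ≤ L i → L i - j ≤ m → ∃ n ≤ L i - j, mtcWk EH (p i j) (q i) n := by
      intro m
      induction m with
      | zero =>
        intro j hj hm
        have hjL : j = L i := by omega
        subst hjL
        exact ⟨0, by omega, by rw [hpL i]; exact mtcWk_refl EH _⟩
      | succ m ih =>
        intro j hj hm
        by_cases hjL : j = L i
        · subst hjL
          exact ⟨0, by omega, by rw [hpL i]; exact mtcWk_refl EH _⟩
        · have hjlt : j < L i := by omega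
          have hspec := Nat.findGreatest_spec (P := fun k => k < L i ∧ p i k = p i j)
            (m := j) (le_of_lt hjlt) ⟨hjlt, rfl⟩
          have hJlt := hspec.1
          have hge : j ≤ Nat.findGreatest (fun k => k < L i ∧ p i k = p i j) (L i) :=
            Nat.le_findGreatest (le_of_lt hjlt) ⟨hjlt, rfl⟩
          have hedge : EH (p i j)
              (p i (Nat.findGreatest (fun k => k < L i ∧ p i k = p i j) (L i) + 1)) := by
            simp only [hEHdef]
            exact Or.inr ⟨i, ⟨j, hjlt, rfl⟩, rfl⟩
          obtain ⟨n, hn, hw⟩ := ih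
            (Nat.findGreatest (fun k => k < L i ∧ p i k = p i j) (L i) + 1)
            (by omega) (by omega)
          exact ⟨n + 1, by omega, mtcWk_cons hedge hw⟩
    obtain ⟨n, hn, hw⟩ := hA (L i) 0 (by omega) (by omega)
    rw [hp0 i] at hw
    have := hL i
    exact ⟨n, by omega, hw⟩
  -- walk from q i to any vertex of the tree
  have hqu : ∀ i, ∀ u ∈ Vt i, ∃ m ≤ Dstar, mtcWk EH (q i) u m := by
    intro i u hu
    obtain ⟨n, hn, hit⟩ := hheight i u hu
    have key : ∀ n, ∀ u ∈ Vt i, (par i)^[n] u = q i → ∃ m ≤ n, mtcWk EH (q i) u m := by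
      intro n
      induction n with
      | zero =>
        intro u hu hit
        have huq : u = q i := by simpa using hit
        exact ⟨0, le_rfl, by rw [huq]; exact mtcWk_refl EH _⟩
      | succ n ih =>
        intro u hu hit
        by_cases huq : u = q i
        · exact ⟨0, by omega, by rw [huq]; exact mtcWk_refl EH _⟩
        · obtain ⟨hpu, hEpu⟩ := hpar i u hu huq
          rw [Function.iterate_succ_apply] at hit
          obtain ⟨m, hm, hw⟩ := ih (par i u) hpu hit
          have hedge : EH (par i u) u := by
            simp only [hEHdef]
            exact Or.inl ⟨i, hu, huq, rfl⟩
          exact ⟨m + 1, by omega, mtcWk_snoc hw hedge⟩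
    obtain ⟨m, hm, hw⟩ := key n u hu hit
    exact ⟨m, by omega, hw⟩
  -- every tree vertex is in T'
  have hVT : ∀ i, Vt i ⊆ T' := by
    intro i u hu
    obtain ⟨n1, h1, w1⟩ := hrq i
    obtain ⟨n2, h2, w2⟩ := hqu i u hu
    exact hmemT' u (n1 + n2) (by omega) (mtcWk_trans w1 w2)
  -- counting terminals
  have hcount : ρ ^ 2 ≤ (T' ∩ S).card := by
    have hsub : Finset.univ.biUnion (fun i => Vt i ∩ S) ⊆ T' ∩ S := by
      intro u hu
      obtain ⟨i, -, hi⟩ := Finset.mem_biUnion.1 hu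
      obtain ⟨h1, h2⟩ := Finset.mem_inter.1 hi
      exact Finset.mem_inter.2 ⟨hVT i h1, h2⟩
    have hcard : (Finset.univ.biUnion (fun i => Vt i ∩ S)).card = ρ ^ 2 := by
      rw [Finset.card_biUnion]
      · simp only [hterm]
        rw [Finset.sum_const, Finset.card_univ, Fintype.card_fin, smul_eq_mul, sq]
      · intro i hi j hj hij
        exact (hdisj i j hij).mono Finset.inter_subset_left Finset.inter_subset_left
    calc ρ ^ 2 = (Finset.univ.biUnion (fun i => Vt i ∩ S)).card := hcard.symm
      _ ≤ (T' ∩ S).card := Finset.card_le_card hsub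
  refine ⟨T', mtcPar EH r, hrT', ?_, ?_, hdeg', hcount⟩
  · intro u hu hur
    obtain ⟨he, hpT, -, -⟩ := hparfact u hu hur
    exact ⟨hpT, hEHE _ _ he⟩
  · intro u hu
    by_cases hur : u = r
    · exact ⟨0, by omega, by rw [hur]; rfl⟩
    · obtain ⟨-, -, -, hd2⟩ := hparfact u hu hur
      exact hiter (2 * Dstar) u hu hd2
end
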